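/- arXiv:1908.00427 — 9 statements merged into one kernel-verified Lean document; each statement's English description precedes it below -/
import Mathlib

section
/- Let p ∈ [0,1) and s ∈ [0,1] be real numbers, q, m natural numbers with m ≥ 1, and set f = 1 − (s + (1−s)·(1−p)^q)^m and A = p·q·(1−s)·m. If A + f ≤ 1, then the probability of a uniquely successful round dominates f·(1−f): ∑_{k=1}^{m} p·q·k·(1−p)^{q·(k−1)} · (m choose k) · (1−s)^k · s^{m−k} ≥ f·(1−f). -/
/-!
With `β = (1 - p)^q` and `b = s + (1 - s)β`, the sum is `p q (1 - s) m b^(m-1)` (it is the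
derivative of the binomial expansion of `b^m`), and `1 - f = b^m`. Bernoulli's inequality gives
both `1 - β ≤ p q` and `f = 1 - (1 - (1 - s)(1 - β))^m ≤ m (1 - s)(1 - β)`, so
`f (1 - f) = f b^m ≤ m (1 - s)(1 - β) b^(m-1) ≤ p q (1 - s) m b^(m-1)`.
-/

open Finset

theorem one_sub_one_sub_pow_le {R : Type*} [CommRing R] [LinearOrder R] [IsStrictOrderedRing R]
    {x : R} (hx : x ≤ 2) (n : ℕ) : 1 - (1 - x) ^ n ≤ n * x := by
  have h := one_add_mul_le_pow (a := -x) (by linarith) n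
  rw [← sub_eq_add_neg, mul_neg] at h
  linarith

theorem sum_Icc_natCast_mul_choose_mul_pow {R : Type*} [CommSemiring R] (x y : R) (m : ℕ) :
    ∑ k ∈ Icc 1 m, (k : R) * m.choose k * x ^ (k - 1) * y ^ (m - k) =
      m * (x + y) ^ (m - 1) := by
  cases m with
  | zero => simp
  | succ n =>
    rw [← Ico_add_one_right_eq_Icc, sum_Ico_eq_sum_range, add_pow, mul_sum]
    simp only [Nat.add_sub_cancel]
    refine sum_congr rfl fun k _ => ?_
    have hc : ((n + 1 : ℕ) : R) * n.choose k = (n + 1).choose (k + 1) * (k + 1 : ℕ) := by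
      rw [← Nat.cast_mul, ← Nat.cast_mul, Nat.add_one_mul_choose_eq]
    rw [add_comm 1 k, Nat.add_sub_cancel, Nat.add_sub_add_right,
      show ((n + 1 : ℕ) : R) * (x ^ k * y ^ (n - k) * n.choose k)
        = ((n + 1 : ℕ) : R) * n.choose k * (x ^ k * y ^ (n - k)) by ring, hc]
    ring

theorem sum_unique_success_eq (p s : ℝ) (q m : ℕ) :
    ∑ k ∈ Icc 1 m,
        p * q * k * (1 - p) ^ (q * (k - 1)) * (m.choose k : ℝ) * (1 - s) ^ k * s ^ (m - k)
      = p * q * (1 - s) * (m * (s + (1 - s) * (1 - p) ^ q) ^ (m - 1)) := by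
  rw [add_comm s, ← sum_Icc_natCast_mul_choose_mul_pow, mul_sum]
  refine sum_congr rfl fun k hk => ?_
  obtain ⟨j, rfl⟩ : ∃ j, k = j + 1 := ⟨k - 1, by have := (mem_Icc.mp hk).1; omega⟩
  rw [Nat.add_sub_cancel, pow_mul, mul_pow, pow_succ]
  ring

theorem unique_successful_round_lower_bound_general
    (p s : ℝ) (hp : p ∈ Set.Ico (0:ℝ) 1) (hs : s ∈ Set.Icc (0:ℝ) 1)
    (q m : ℕ) (f : ℝ)
    (hf : f = 1 - (s + (1 - s) * (1 - p) ^ q) ^ m) :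
    ∑ k ∈ Finset.Icc 1 m,
        p * q * k * (1 - p) ^ (q * (k - 1)) * (m.choose k : ℝ) * (1 - s) ^ k * s ^ (m - k)
      ≥ f * (1 - f) := by
  obtain ⟨hp0, hp1⟩ := hp
  obtain ⟨hs0, hs1⟩ := hs
  set β := (1 - p) ^ q
  set b := s + (1 - s) * β
  have hβ0 : 0 ≤ β := pow_nonneg (by linarith) q
  have hβ1 : β ≤ 1 := pow_le_one₀ (by linarith) (by linarith)
  have h1β : 1 - β ≤ p * q := by
    simpa only [mul_comm (q : ℝ)] using one_sub_one_sub_pow_le (by linarith : p ≤ 2) q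
  have hb : b = 1 - (1 - s) * (1 - β) := by ring
  have hb0 : 0 ≤ b := by positivity
  have hb1 : b ≤ 1 := by nlinarith
  have hf_le : f ≤ m * ((1 - s) * (1 - β)) := by
    rw [hf, hb]
    exact one_sub_one_sub_pow_le (by nlinarith) m
  rw [ge_iff_le, sum_unique_success_eq]
  calc f * (1 - f) = f * b ^ m := by rw [hf]; ring
    _ ≤ m * ((1 - s) * (1 - β)) * b ^ (m - 1) :=
      mul_le_mul hf_le (pow_le_pow_of_le_one hb0 hb1 (Nat.sub_le m 1)) (by positivity)
        (by positivity)
    _ ≤ m * ((1 - s) * (p * q)) * b ^ (m - 1) := by gcongr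
    _ = p * q * (1 - s) * (m * b ^ (m - 1)) := by ring

/-- The probability of a uniquely successful round dominates `E[X_i](1 - E[X_i])`,
assuming `p·q·E[n_alert] + E[X_i] ≤ 1`. -/
theorem unique_successful_round_lower_bound
    (p s : ℝ) (hp : p ∈ Set.Ico (0:ℝ) 1) (hs : s ∈ Set.Icc (0:ℝ) 1)
    (q m : ℕ) (hm : 1 ≤ m) (f A : ℝ)
    (hf : f = 1 - (s + (1 - s) * (1 - p) ^ q) ^ m)
    (hA : A = p * q * (1 - s) * m) (hAf : A + f ≤ 1) :
    ∑ k ∈ Finset.Icc 1 m,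
        p * q * k * (1 - p) ^ (q * (k - 1)) * (m.choose k : ℝ) * (1 - s) ^ k * s ^ (m - k)
      ≥ f * (1 - f) :=
  unique_successful_round_lower_bound_general p s hp hs q m f hf
end

section
/- Let ε, f ∈ (0,1) and δ ∈ (0,1] be real numbers with δ ≥ 2f + 2ε, let c ∈ [0,1], and let t ≥ 0 and m > 0 be real numbers with t ≤ c·(1−δ)·m. Set σ = (1−ε)·(1−f). Then for any real numbers L > 0, X, Z with Z < (1+ε)·(t/m)·(f/(1−f))·L and X > (1−ε)·f·L, it holds that Z < (1 + δ/σ)·(t/m)·X and (1 + δ/σ)·(t/m)·X ≤ c·(1 − δ²/(2σ))·X. -/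
/-- Synchronous-model typical-execution bound (Lemma 4 d):
`Z(S) < (1 + δ/σ)·(t/E[n_alert])·X(S) ≤ c·(1 - δ²/(2σ))·X(S)`. -/
theorem typical_execution_sync_d
    (ε f δ c t m : ℝ)
    (hε : ε ∈ Set.Ioo (0:ℝ) 1) (hf : f ∈ Set.Ioo (0:ℝ) 1)
    (hδ : δ ∈ Set.Ioc (0:ℝ) 1) (hδ2 : 2 * f + 2 * ε ≤ δ)
    (hc : c ∈ Set.Icc (0:ℝ) 1) (ht : 0 ≤ t) (hm : 0 < m)
    (htm : t ≤ c * (1 - δ) * m) :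
    ∀ L X Z : ℝ, 0 < L →
      Z < (1 + ε) * (t / m) * (f / (1 - f)) * L →
      X > (1 - ε) * f * L →
      Z < (1 + δ / ((1 - ε) * (1 - f))) * (t / m) * X ∧
        (1 + δ / ((1 - ε) * (1 - f))) * (t / m) * X
          ≤ c * (1 - δ ^ 2 / (2 * ((1 - ε) * (1 - f)))) * X := by
  obtain ⟨hε0, hε1⟩ := hε
  obtain ⟨hf0, hf1⟩ := hf
  obtain ⟨hδ0, hδ1⟩ := hδ
  obtain ⟨hc0, hc1⟩ := hc
  intro L X Z hL hZ hX
  have h1f : (0:ℝ) < 1 - f := by linarith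
  have h1e : (0:ℝ) < 1 - ε := by linarith
  have hσ : (0:ℝ) < (1 - ε) * (1 - f) := mul_pos h1e h1f
  have hXpos : 0 < X := lt_trans (by positivity) hX
  have htm0 : 0 ≤ t / m := div_nonneg ht hm.le
  have hcoef : 0 ≤ 1 + δ / ((1 - ε) * (1 - f)) := by positivity
  -- key algebraic identity
  have hid : (1 + δ / ((1 - ε) * (1 - f))) * ((1 - ε) * f)
      = ((1 - ε) * (1 - f) + δ) * (f / (1 - f)) := by
    field_simp
  have hge : 1 + ε ≤ (1 - ε) * (1 - f) + δ := by nlinarith [mul_nonneg hε0.le hf0.le]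
  constructor
  · have step1 : (1 + ε) * (f / (1 - f)) ≤ (1 + δ / ((1 - ε) * (1 - f))) * ((1 - ε) * f) := by
      rw [hid]
      exact mul_le_mul_of_nonneg_right hge (by positivity)
    calc Z < (1 + ε) * (t / m) * (f / (1 - f)) * L := hZ
      _ = ((1 + ε) * (f / (1 - f))) * ((t / m) * L) := by ring
      _ ≤ ((1 + δ / ((1 - ε) * (1 - f))) * ((1 - ε) * f)) * ((t / m) * L) := by
          apply mul_le_mul_of_nonneg_right step1
          positivity
      _ = (1 + δ / ((1 - ε) * (1 - f))) * (t / m) * ((1 - ε) * f * L) := by ring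
      _ ≤ (1 + δ / ((1 - ε) * (1 - f))) * (t / m) * X := by
          apply mul_le_mul_of_nonneg_left hX.le
          positivity
  · have hq : t / m ≤ c * (1 - δ) := (div_le_iff₀ hm).2 (by linarith)
    have hpoly : (1 - δ) * (1 + δ / ((1 - ε) * (1 - f)))
        ≤ 1 - δ ^ 2 / (2 * ((1 - ε) * (1 - f))) := by
      have e1 : (1:ℝ) + δ / ((1 - ε) * (1 - f))
          = ((1 - ε) * (1 - f) + δ) / ((1 - ε) * (1 - f)) := by
        field_simp
      have e2 : (1:ℝ) - δ ^ 2 / (2 * ((1 - ε) * (1 - f)))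
          = (2 * ((1 - ε) * (1 - f)) - δ ^ 2) / (2 * ((1 - ε) * (1 - f))) := by
        field_simp
      rw [e1, e2, mul_div_assoc', div_le_div_iff₀ hσ (by positivity)]
      have h2 : 2 * (1 - (1 - ε) * (1 - f)) ≤ δ := by
        nlinarith [mul_nonneg hε0.le hf0.le]
      nlinarith [mul_nonneg (mul_nonneg hσ.le hδ0.le)
        (by linarith : 0 ≤ δ - 2 * (1 - (1 - ε) * (1 - f)))]
    have hcd : 0 ≤ c * (1 - δ) := mul_nonneg hc0 (by linarith)
    have : (1 + δ / ((1 - ε) * (1 - f))) * (t / m)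
        ≤ c * (1 - δ ^ 2 / (2 * ((1 - ε) * (1 - f)))) := by
      calc (1 + δ / ((1 - ε) * (1 - f))) * (t / m)
          ≤ (1 + δ / ((1 - ε) * (1 - f))) * (c * (1 - δ)) :=
            mul_le_mul_of_nonneg_left hq hcoef
        _ = c * ((1 - δ) * (1 + δ / ((1 - ε) * (1 - f)))) := by ring
        _ ≤ c * (1 - δ ^ 2 / (2 * ((1 - ε) * (1 - f)))) :=
            mul_le_mul_of_nonneg_left hpoly hc0
    exact mul_le_mul_of_nonneg_right this hXpos.le
end

section
/- Let ε, f ∈ (0,1) and δ ∈ (0,1] be real numbers with δ ≥ 2f + 2ε, let c ∈ [0,1], and let t ≥ 0 and m > 0 be real numbers with t ≤ c·(1−δ)·m. Then for any real numbers L > 0, Y, Z with Z < (1+ε)·(t/m)·(f/(1−f))·L and Y > (1−ε)·f·(1−f)·L, it holds that Z < Y. -/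
/-- Synchronous-model typical-execution bound (Lemma 4 e): `Z(S) < Y(S)`. -/
theorem typical_execution_sync_e
    (ε f δ c t m : ℝ)
    (hε : ε ∈ Set.Ioo (0:ℝ) 1) (hf : f ∈ Set.Ioo (0:ℝ) 1)
    (hδ : δ ∈ Set.Ioc (0:ℝ) 1) (hδ2 : 2 * f + 2 * ε ≤ δ)
    (hc : c ∈ Set.Icc (0:ℝ) 1) (ht : 0 ≤ t) (hm : 0 < m)
    (htm : t ≤ c * (1 - δ) * m) :
    ∀ L Y Z : ℝ, 0 < L →
      Z < (1 + ε) * (t / m) * (f / (1 - f)) * L →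
      Y > (1 - ε) * f * (1 - f) * L →
      Z < Y := by
  obtain ⟨hε0, hε1⟩ := hε
  obtain ⟨hf0, hf1⟩ := hf
  obtain ⟨hδ0, hδ1⟩ := hδ
  obtain ⟨hc0, hc1⟩ := hc
  intro L Y Z hL hZ hY
  have hq : t / m ≤ c * (1 - δ) := (div_le_iff₀ hm).mpr htm
  have hq2 : c * (1 - δ) ≤ 1 - 2*f - 2*ε := by nlinarith
  have hfm : (0:ℝ) < 1 - f := by linarith
  have key : (1 + ε) * (t / m) * (f / (1 - f)) * L ≤ (1 - ε) * f * (1 - f) * L := by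
    have hq3 : t / m ≤ 1 - 2*f - 2*ε := le_trans hq hq2
    have hq0 : 0 ≤ t / m := div_nonneg ht hm.le
    have : (1 + ε) * (t / m) * f ≤ (1 - ε) * f * (1 - f) * (1 - f) := by nlinarith [mul_le_mul_of_nonneg_left hq3 (by nlinarith : (0:ℝ) ≤ (1 + ε) * f), mul_pos hf0 (mul_pos hε0 hε0), mul_pos (mul_pos hf0 hf0) hε0, mul_pos (mul_pos hf0 hf0) (mul_pos hε0 hε0) ]
    calc (1 + ε) * (t / m) * (f / (1 - f)) * L
        = ((1 + ε) * (t / m) * f) * (L / (1 - f)) := by ring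
      _ ≤ ((1 - ε) * f * (1 - f) * (1 - f)) * (L / (1 - f)) := by
          apply mul_le_mul_of_nonneg_right this (by positivity)
      _ = (1 - ε) * f * (1 - f) * L := by field_simp
  linarith
end

section
/- Let ε, f ∈ (0,1) be real numbers, Δ ≥ 1 a natural number, η·κ > 0 a real number, δ ∈ (0,1] with δ ≥ 2Δf + 4ε + 4Δ/(ηκ), c ∈ [0,1], and t ≥ 0, m > 0 real numbers with t ≤ c·(1−δ)·m. Set σ' = (1−ε)·(1−f)^Δ. Then for all real numbers L' ≥ ηκ, L = L' + Δ, and X', Z with Z < (1+ε)·(t/m)·(f/(1−f))·L and X' > (1−ε)·f·(1−f)^{Δ−1}·L', it holds that Z < (1 + δ/(2σ'))·(t/m)·X'. -/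
/-!
With `σ' = (1 - ε)(1 - f)^Δ`: since `L' ≥ ηκ` gives `Δ ≤ Δ·L'/ηκ`, and Bernoulli gives
`σ' ≥ 1 - Δf - ε`, the hypothesis on `δ` yields `(1 + ε)·L ≤ (σ' + δ/2)·L'`. Multiplying by
`f/(1 - f)` turns the right-hand side into `(1 + δ/(2σ'))·(1 - ε)·f·(1 - f)^(Δ-1)·L'`, which is
below `(1 + δ/(2σ'))·X'`; scaling by `t/m ≥ 0` finishes.
-/

namespace TypicalExecution

variable {ε f δ ηκ : ℝ} {Δ : ℕ}

lemma one_sub_mul_le_one_sub_pow (hf : f ≤ 2) : 1 - Δ * f ≤ (1 - f) ^ Δ := by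
  simpa [sub_eq_add_neg] using one_add_mul_sub_le_pow (a := 1 - f) (by linarith) Δ

lemma one_add_add_le_sigma_add (hε₀ : 0 ≤ ε) (hε₁ : ε ≤ 1) (hf₀ : 0 ≤ f) (hf₂ : f ≤ 2)
    (hδ : 2 * Δ * f + 4 * ε + 4 * Δ / ηκ ≤ δ) :
    1 + ε + 2 * Δ / ηκ ≤ (1 - ε) * (1 - f) ^ Δ + δ / 2 := by
  have hσ : (1 - ε) * (1 - Δ * f) ≤ (1 - ε) * (1 - f) ^ Δ :=
    mul_le_mul_of_nonneg_left (one_sub_mul_le_one_sub_pow hf₂) (by linarith)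
  have : 0 ≤ ε * (Δ * f) := by positivity
  linarith [show 2 * (Δ : ℝ) / ηκ = 4 * Δ / ηκ / 2 by ring]

lemma one_add_mul_window_le (hε₀ : 0 ≤ ε) (hε₁ : ε ≤ 1) (hf₀ : 0 ≤ f) (hf₂ : f ≤ 2)
    (hηκ : 0 < ηκ) (hδ : 2 * Δ * f + 4 * ε + 4 * Δ / ηκ ≤ δ) {L' : ℝ} (hL' : ηκ ≤ L') :
    (1 + ε) * (L' + Δ) ≤ ((1 - ε) * (1 - f) ^ Δ + δ / 2) * L' := by
  have hcoef := one_add_add_le_sigma_add hε₀ hε₁ hf₀ hf₂ hδ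
  have hΔ : (Δ : ℝ) ≤ Δ / ηκ * L' := by
    rw [div_mul_eq_mul_div, le_div_iff₀ hηκ]
    exact mul_le_mul_of_nonneg_left hL' Δ.cast_nonneg
  have hεΔ : ε * Δ ≤ Δ := mul_le_of_le_one_left Δ.cast_nonneg hε₁
  have := mul_le_mul_of_nonneg_right hcoef (hηκ.le.trans hL')
  linarith [show 2 * (Δ : ℝ) / ηκ * L' = 2 * (Δ / ηκ * L') by ring]

lemma one_add_div_mul_isolated_rate (hΔ : 1 ≤ Δ) (hε : ε ≠ 1) (hf : f ≠ 1) :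
    (1 + δ / (2 * ((1 - ε) * (1 - f) ^ Δ))) * ((1 - ε) * f * (1 - f) ^ (Δ - 1)) =
      ((1 - ε) * (1 - f) ^ Δ + δ / 2) * (f / (1 - f)) := by
  obtain ⟨k, rfl⟩ := Nat.exists_eq_add_of_le' hΔ
  have : 1 - ε ≠ 0 := sub_ne_zero.mpr hε.symm
  have : 1 - f ≠ 0 := sub_ne_zero.mpr hf.symm
  simp only [Nat.add_sub_cancel]
  field_simp
  ring

lemma one_add_mul_rate_mul_window_le (hε : ε ∈ Set.Ioo (0 : ℝ) 1) (hf : f ∈ Set.Ioo (0 : ℝ) 1)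
    (hΔ : 1 ≤ Δ) (hηκ : 0 < ηκ) (hδ : 2 * Δ * f + 4 * ε + 4 * Δ / ηκ ≤ δ) {L' X' : ℝ}
    (hL' : ηκ ≤ L') (hX' : (1 - ε) * f * (1 - f) ^ (Δ - 1) * L' < X') :
    (1 + ε) * (f / (1 - f)) * (L' + Δ) ≤ (1 + δ / (2 * ((1 - ε) * (1 - f) ^ Δ))) * X' := by
  obtain ⟨hε₀, hε₁⟩ := hε
  obtain ⟨hf₀, hf₁⟩ := hf
  have hK : 0 ≤ 1 + δ / (2 * ((1 - ε) * (1 - f) ^ Δ)) := by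
    have : 0 ≤ δ := le_trans (by positivity) hδ
    have : 0 ≤ 1 - ε := by linarith
    have : 0 ≤ 1 - f := by linarith
    positivity
  have hrate : 0 ≤ f / (1 - f) := div_nonneg hf₀.le (by linarith)
  calc (1 + ε) * (f / (1 - f)) * (L' + Δ) = f / (1 - f) * ((1 + ε) * (L' + Δ)) := by ring
    _ ≤ f / (1 - f) * (((1 - ε) * (1 - f) ^ Δ + δ / 2) * L') :=
        mul_le_mul_of_nonneg_left
          (one_add_mul_window_le hε₀.le hε₁.le hf₀.le (by linarith) hηκ hδ hL') hrate
    _ = ((1 - ε) * (1 - f) ^ Δ + δ / 2) * (f / (1 - f)) * L' := by ring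
    _ = (1 + δ / (2 * ((1 - ε) * (1 - f) ^ Δ))) * ((1 - ε) * f * (1 - f) ^ (Δ - 1)) * L' := by
        rw [one_add_div_mul_isolated_rate hΔ hε₁.ne hf₁.ne]
    _ ≤ _ := by rw [mul_assoc]; exact mul_le_mul_of_nonneg_left hX'.le hK

end TypicalExecution

open TypicalExecution in
theorem typical_execution_bounded_delay_d_general
    (ε f : ℝ) (hε : ε ∈ Set.Ioo (0:ℝ) 1) (hf : f ∈ Set.Ioo (0:ℝ) 1)
    (Δ : ℕ) (hΔ : 1 ≤ Δ) (ηκ : ℝ) (hηκ : 0 < ηκ)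
    (δ : ℝ)
    (hδ2 : 2 * Δ * f + 4 * ε + 4 * Δ / ηκ ≤ δ)
    (t m : ℝ) (ht : 0 ≤ t) (hm : 0 < m) :
    ∀ L' L X' Z : ℝ, ηκ ≤ L' → L = L' + Δ →
      Z < (1 + ε) * (t / m) * (f / (1 - f)) * L →
      X' > (1 - ε) * f * (1 - f) ^ (Δ - 1) * L' →
      Z < (1 + δ / (2 * ((1 - ε) * (1 - f) ^ Δ))) * (t / m) * X' := by
  rintro L' L X' Z hL' rfl hZ hX'
  have hbound := one_add_mul_rate_mul_window_le hε hf hΔ hηκ hδ2 hL' hX'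
  calc Z < t / m * ((1 + ε) * (f / (1 - f)) * (L' + Δ)) := by linarith
    _ ≤ t / m * ((1 + δ / (2 * ((1 - ε) * (1 - f) ^ Δ))) * X') := by gcongr
    _ = _ := by ring

/-- Bounded-delay typical-execution bound (Lemma 5 d):
`Z(S) < (1 + δ/(2σ'))·(t/E[n_alert])·X'(S')`. -/
theorem typical_execution_bounded_delay_d
    (ε f : ℝ) (hε : ε ∈ Set.Ioo (0:ℝ) 1) (hf : f ∈ Set.Ioo (0:ℝ) 1)
    (Δ : ℕ) (hΔ : 1 ≤ Δ) (ηκ : ℝ) (hηκ : 0 < ηκ)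
    (δ : ℝ) (hδ : δ ∈ Set.Ioc (0:ℝ) 1)
    (hδ2 : 2 * Δ * f + 4 * ε + 4 * Δ / ηκ ≤ δ)
    (c : ℝ) (hc : c ∈ Set.Icc (0:ℝ) 1)
    (t m : ℝ) (ht : 0 ≤ t) (hm : 0 < m) (htm : t ≤ c * (1 - δ) * m) :
    ∀ L' L X' Z : ℝ, ηκ ≤ L' → L = L' + Δ →
      Z < (1 + ε) * (t / m) * (f / (1 - f)) * L →
      X' > (1 - ε) * f * (1 - f) ^ (Δ - 1) * L' →
      Z < (1 + δ / (2 * ((1 - ε) * (1 - f) ^ Δ))) * (t / m) * X' :=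
  typical_execution_bounded_delay_d_general ε f hε hf Δ hΔ ηκ hηκ δ hδ2 t m ht hm
end

section
/- Let ε, f ∈ (0,1) be real numbers, Δ ≥ 1 a natural number, η·κ > 0 a real number, δ ∈ (0,1] with δ ≥ 2Δf + 4ε + 4Δ/(ηκ), c ∈ [0,1], and t ≥ 0, m > 0 real numbers with t ≤ c·(1−δ)·m. Then for all real numbers L' ≥ ηκ, L = L' + 2Δ, and Y', Z with Z < (1+ε)·(t/m)·(f/(1−f))·L and Y' > (1−ε)·f·(1−f)^{2Δ−1}·L', it holds that Z < Y'. -/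
/-!
It suffices to compare the two typicality bounds. Writing
`f (1 - f)^(2Δ - 1) = f/(1 - f) · (1 - f)^(2Δ)`, the common factor `f/(1 - f)` cancels, and
Bernoulli's inequality `(1 - f)^(2Δ) ≥ 1 - 2Δf`, the honest-majority bound `t/m ≤ 1 - δ` and
`L ≤ (1 + 2Δ/(ηκ)) L'` reduce the comparison to a scalar inequality, which is where the
margin `δ ≥ 2Δf + 4ε + 4Δ/(ηκ)` is spent.
-/

lemma div_le_one_sub_of_le_mul {t m c δ : ℝ} (hm : 0 < m) (hc : c ≤ 1) (hδ : δ ≤ 1)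
    (htm : t ≤ c * (1 - δ) * m) : t / m ≤ 1 - δ := by
  rw [div_le_iff₀ hm]
  nlinarith [mul_nonneg (sub_nonneg.2 hc) (mul_nonneg (sub_nonneg.2 hδ) hm.le)]

lemma add_le_one_add_div_mul {a x k : ℝ} (ha : 0 < a) (hax : a ≤ x) (hk : 0 ≤ k) :
    x + k ≤ (1 + k / a) * x := by
  have : k ≤ k / a * x := by
    rw [div_mul_eq_mul_div, le_div_iff₀ ha]
    exact mul_le_mul_of_nonneg_left hax hk
  linarith

lemma mul_pow_pred_eq_div_mul_pow {p : ℝ} (hp : p ≠ 1) {n : ℕ} (hn : n ≠ 0) :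
    p * (1 - p) ^ (n - 1) = p / (1 - p) * (1 - p) ^ n := by
  have : 1 - p ≠ 0 := sub_ne_zero.2 hp.symm
  rw [← pow_sub_one_mul hn]
  field_simp

lemma one_add_mul_one_sub_mul_one_add_le {ε b u δ : ℝ} (hε : ε ∈ Set.Ioo (0 : ℝ) 1)
    (hb : 0 ≤ b) (hu : 0 ≤ u) (hδ : δ ≤ 1) (hmargin : u + 4 * ε + 2 * b ≤ δ) :
    (1 + ε) * (1 - δ) * (1 + b) ≤ (1 - ε) * (1 - u) := by
  obtain ⟨hε0, hε1⟩ := hε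
  have hδ' : 0 ≤ 1 - δ := sub_nonneg.2 hδ
  nlinarith [mul_nonneg hδ' hb, mul_nonneg (mul_nonneg hε0.le hδ') hb, mul_nonneg hε0.le hb,
    mul_nonneg hε0.le hu]

lemma mul_div_one_sub_mul_le_mul_pow_pred {ε f r δ b L L' : ℝ} {n : ℕ} (hn : n ≠ 0)
    (hε : ε ∈ Set.Icc (-1 : ℝ) 1) (hf : f ∈ Set.Ioo (0 : ℝ) 1) (hr : r ≤ 1 - δ) (hδ : δ ≤ 1)
    (hL : 0 ≤ L) (hL' : 0 ≤ L') (hwindow : L ≤ (1 + b) * L')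
    (hmargin : (1 + ε) * (1 - δ) * (1 + b) ≤ (1 - ε) * (1 - n * f)) :
    (1 + ε) * r * (f / (1 - f)) * L ≤ (1 - ε) * f * (1 - f) ^ (n - 1) * L' := by
  obtain ⟨hf0, hf1⟩ := hf
  have hbernoulli : 1 - n * f ≤ (1 - f) ^ n := by
    simpa [sub_sub_cancel_left, ← sub_eq_add_neg] using
      one_add_mul_sub_le_pow (a := 1 - f) (by linarith) n
  have hodds : 0 ≤ f / (1 - f) := div_nonneg hf0.le (by linarith)
  have hδ1 : 0 ≤ 1 - δ := sub_nonneg.2 hδ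
  have hε1 : 0 ≤ 1 - ε := sub_nonneg.2 hε.2
  have hε2 : 0 ≤ 1 + ε := neg_le_iff_add_nonneg'.1 hε.1
  calc (1 + ε) * r * (f / (1 - f)) * L
      = f / (1 - f) * ((1 + ε) * r * L) := by ring
    _ ≤ f / (1 - f) * ((1 + ε) * (1 - δ) * ((1 + b) * L')) := by
        gcongr ?_ * ?_
        gcongr
    _ = f / (1 - f) * ((1 + ε) * (1 - δ) * (1 + b) * L') := by ring
    _ ≤ f / (1 - f) * ((1 - ε) * (1 - n * f) * L') := by gcongr
    _ ≤ f / (1 - f) * ((1 - ε) * (1 - f) ^ n * L') := by gcongr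
    _ = (1 - ε) * (f * (1 - f) ^ (n - 1)) * L' := by
        rw [mul_pow_pred_eq_div_mul_pow hf1.ne hn]; ring
    _ = (1 - ε) * f * (1 - f) ^ (n - 1) * L' := by ring

theorem typical_execution_bounded_delay_e_general
    (ε f : ℝ) (hε : ε ∈ Set.Ioo (0:ℝ) 1) (hf : f ∈ Set.Ioo (0:ℝ) 1)
    (Δ : ℕ) (hΔ : 1 ≤ Δ) (ηκ : ℝ) (hηκ : 0 < ηκ)
    (δ : ℝ) (hδ : δ ∈ Set.Ioc (0:ℝ) 1)
    (hδ2 : 2 * Δ * f + 4 * ε + 4 * Δ / ηκ ≤ δ)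
    (c : ℝ) (hc : c ∈ Set.Icc (0:ℝ) 1)
    (t m : ℝ) (hm : 0 < m) (htm : t ≤ c * (1 - δ) * m) :
    ∀ L' L Y' Z : ℝ, ηκ ≤ L' → L = L' + 2 * Δ →
      Z < (1 + ε) * (t / m) * (f / (1 - f)) * L →
      Y' > (1 - ε) * f * (1 - f) ^ (2 * Δ - 1) * L' →
      Z < Y' := by
  intro L' L Y' Z hL' hL hZ hY'
  have hL'0 : 0 ≤ L' := (hηκ.trans_le hL').le
  have hrate : t / m ≤ 1 - δ := div_le_one_sub_of_le_mul hm hc.2 hδ.2 htm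
  have hwindow : L ≤ (1 + 2 * Δ / ηκ) * L' := hL ▸ add_le_one_add_div_mul hηκ hL' (by positivity)
  have hmargin : (1 + ε) * (1 - δ) * (1 + 2 * Δ / ηκ) ≤ (1 - ε) * (1 - (2 * Δ : ℕ) * f) := by
    push_cast
    exact one_add_mul_one_sub_mul_one_add_le hε (by positivity) (by positivity [hf.1]) hδ.2
      (by linarith [show 4 * (Δ : ℝ) / ηκ = 2 * (2 * Δ / ηκ) by ring])
  have hexpect := mul_div_one_sub_mul_le_mul_pow_pred (by omega)
    ⟨by linarith [hε.1], hε.2.le⟩ hf hrate hδ.2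
    (by rw [hL]; positivity) hL'0 hwindow hmargin
  exact hZ.trans (hexpect.trans_lt hY')

/-- Bounded-delay typical-execution bound (Lemma 5 e): `Z(S) < Y'(S')`. -/
theorem typical_execution_bounded_delay_e
    (ε f : ℝ) (hε : ε ∈ Set.Ioo (0:ℝ) 1) (hf : f ∈ Set.Ioo (0:ℝ) 1)
    (Δ : ℕ) (hΔ : 1 ≤ Δ) (ηκ : ℝ) (hηκ : 0 < ηκ)
    (δ : ℝ) (hδ : δ ∈ Set.Ioc (0:ℝ) 1)
    (hδ2 : 2 * Δ * f + 4 * ε + 4 * Δ / ηκ ≤ δ)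
    (c : ℝ) (hc : c ∈ Set.Icc (0:ℝ) 1)
    (t m : ℝ) (ht : 0 ≤ t) (hm : 0 < m) (htm : t ≤ c * (1 - δ) * m) :
    ∀ L' L Y' Z : ℝ, ηκ ≤ L' → L = L' + 2 * Δ →
      Z < (1 + ε) * (t / m) * (f / (1 - f)) * L →
      Y' > (1 - ε) * f * (1 - f) ^ (2 * Δ - 1) * L' →
      Z < Y' :=
  typical_execution_bounded_delay_e_general ε f hε hf Δ hΔ ηκ hηκ δ hδ hδ2 c hc t m hm htm
end

section
/- Let ε, f ∈ (0,1) be real numbers, Δ ≥ 1 a natural number, η·κ > 0 a real number, and δ a real number with 2Δf + 4ε + 4Δ/(ηκ) ≤ δ ≤ 1. Then (1+ε)·(1 + 2Δ/(ηκ))·(1−δ) ≤ (1−ε)·(1−f)^{2Δ}. -/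
/-- Key algebraic inequality in the proof of `Z(S) < Y'(S')` in the bounded-delay
model: `(1+ε)(1 + 2Δ/(ηκ))(1-δ) ≤ (1-ε)(1-f)^(2Δ)`. -/
theorem key_inequality_bounded_delay
    (ε f : ℝ) (hε : ε ∈ Set.Ioo (0:ℝ) 1) (hf : f ∈ Set.Ioo (0:ℝ) 1)
    (Δ : ℕ) (hΔ : 1 ≤ Δ) (ηκ : ℝ) (hηκ : 0 < ηκ)
    (δ : ℝ) (h1 : 2 * Δ * f + 4 * ε + 4 * Δ / ηκ ≤ δ) (h2 : δ ≤ 1) :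
    (1 + ε) * (1 + 2 * Δ / ηκ) * (1 - δ) ≤ (1 - ε) * (1 - f) ^ (2 * Δ) := by
  obtain ⟨hε0, hε1⟩ := hε
  obtain ⟨hf0, hf1⟩ := hf
  set a : ℝ := 2 * Δ / ηκ with ha_def
  have ha : 0 < a := by
    apply div_pos _ hηκ
    positivity
  -- Bernoulli: 1 - 2Δ f ≤ (1-f)^(2Δ)
  have hbern : 1 - (2 * Δ : ℝ) * f ≤ (1 - f) ^ (2 * Δ) := by
    have := one_add_mul_le_pow (a := -f) (by linarith) (2 * Δ)
    have h2Δ : ((2 * Δ : ℕ) : ℝ) = 2 * (Δ : ℝ) := by push_cast; ring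
    calc 1 - (2 * Δ : ℝ) * f = 1 + ((2 * Δ : ℕ) : ℝ) * (-f) := by rw [h2Δ]; ring
      _ ≤ (1 + -f) ^ (2 * Δ) := this
      _ = (1 - f) ^ (2 * Δ) := by ring_nf
  set t : ℝ := 2 * Δ * f with ht_def
  have ht : 0 < t := by positivity
  have h1' : t + 4 * ε + 2 * a ≤ δ := by
    have : 4 * Δ / ηκ = 2 * a := by rw [ha_def]; ring
    linarith
  have hpow : (0:ℝ) ≤ (1 - f) ^ (2 * Δ) := pow_nonneg (by linarith) _
  have key : (1 + ε) * (1 + a) * (1 - δ) ≤ (1 - ε) * (1 - t) := by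
    nlinarith [mul_pos hε0 ha, mul_pos ht ha, mul_pos hε0 ht,
      mul_nonneg (mul_nonneg hε0.le ha.le) (by linarith : (0:ℝ) ≤ 1 - δ),
      mul_nonneg ht.le ha.le, mul_pos (mul_pos hε0 ha) ht,
      mul_nonneg (mul_nonneg hε0.le ht.le) ha.le,
      mul_nonneg ha.le ha.le, mul_nonneg hε0.le hε0.le,
      mul_nonneg (add_nonneg (add_nonneg ht.le (by linarith : (0:ℝ) ≤ 4*ε)) (by linarith : (0:ℝ) ≤ 2*a)) (mul_nonneg hε0.le ha.le)]
  calc (1 + ε) * (1 + a) * (1 - δ) ≤ (1 - ε) * (1 - t) := key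
    _ ≤ (1 - ε) * (1 - f) ^ (2 * Δ) := by
        apply mul_le_mul_of_nonneg_left hbern (by linarith)
end

section
/- Let a > 0 and b ≥ 0 be real numbers such that (1+a)²·(1−a·b)² ≥ 1. Then b² / ((1+a)²·(1−a·b)²·(a + a·b + b)²) ≤ b/a. -/
/-- Final inequality in the proof that the race probability `φ` is at most
`s/(1-s)`: `b²/((1+a)²(1-ab)²(a+ab+b)²) ≤ b/a`. -/
theorem race_probability_bound
    (a b : ℝ) (ha : 0 < a) (hb : 0 ≤ b)
    (h : 1 ≤ (1 + a) ^ 2 * (1 - a * b) ^ 2) :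
    b ^ 2 / ((1 + a) ^ 2 * (1 - a * b) ^ 2 * (a + a * b + b) ^ 2) ≤ b / a := by
  have hs : 0 < a + a * b + b := by positivity
  have hD : 0 < (1 + a) ^ 2 * (1 - a * b) ^ 2 * (a + a * b + b) ^ 2 := by
    have : (0:ℝ) < (1 + a) ^ 2 * (1 - a * b) ^ 2 := lt_of_lt_of_le one_pos h
    positivity
  rw [div_le_div_iff₀ hD ha]
  have h1 : a * b ^ 2 ≤ b * (a + a * b + b) ^ 2 := by nlinarith [mul_nonneg (mul_nonneg ha.le ha.le) hb, mul_nonneg (mul_nonneg ha.le hb) hb, mul_nonneg (mul_nonneg hb hb) hb, mul_nonneg (mul_nonneg ha.le ha.le) (mul_nonneg hb (mul_nonneg hb hb)), mul_nonneg (mul_nonneg ha.le ha.le) (mul_nonneg hb hb), mul_nonneg ha.le (mul_nonneg hb (mul_nonneg hb hb))]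
  have h2 : b * (a + a * b + b) ^ 2 ≤ b * ((1 + a) ^ 2 * (1 - a * b) ^ 2 * (a + a * b + b) ^ 2) := by
    nlinarith [mul_le_mul_of_nonneg_left h (mul_nonneg hb (sq_nonneg (a + a*b + b)))]
  nlinarith
end

section
/- Let ε, f ∈ (0,1) and δ ∈ (0,1] be real numbers with δ ≥ 3ε + 2f, let c ∈ [0,1], let s ∈ [0,1), and let t ≥ 0, m₀ > 0 be real numbers with t + s·(1−s)·m₀ ≤ c·(1−δ)·(1−s)²·m₀. Set m* = (1−s)²·m₀ and σ* = (1−ε)·(1−f). Then for any real numbers L > 0, X*, Z with Z < (1+ε)·(t/m*)·(f/(1−f))·L and X* > (1−ε)·f·L, it holds that Z < (1 + δ/σ*)·(t/m*)·X* and (1 + δ/σ*)·(t/m*)·X* ≤ c·(1 − δ²/(2σ*))·X*. -/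
/-- Message-loss typical-execution bound (Lemma 9 d):
`Z(S) < (1 + δ/σ*)·(t/E[n*_alert])·X*(S) ≤ c·(1 - δ²/(2σ*))·X*(S)`. -/
theorem typical_execution_message_loss_d
    (ε f δ c s t m₀ : ℝ)
    (hε : ε ∈ Set.Ioo (0:ℝ) 1) (hf : f ∈ Set.Ioo (0:ℝ) 1)
    (hδ : δ ∈ Set.Ioc (0:ℝ) 1) (hδ2 : 3 * ε + 2 * f ≤ δ)
    (hc : c ∈ Set.Icc (0:ℝ) 1) (hs : s ∈ Set.Ico (0:ℝ) 1)
    (ht : 0 ≤ t) (hm : 0 < m₀)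
    (htm : t + s * (1 - s) * m₀ ≤ c * (1 - δ) * ((1 - s) ^ 2 * m₀)) :
    ∀ L X' Z : ℝ, 0 < L →
      Z < (1 + ε) * (t / ((1 - s) ^ 2 * m₀)) * (f / (1 - f)) * L →
      X' > (1 - ε) * f * L →
      Z < (1 + δ / ((1 - ε) * (1 - f))) * (t / ((1 - s) ^ 2 * m₀)) * X' ∧
        (1 + δ / ((1 - ε) * (1 - f))) * (t / ((1 - s) ^ 2 * m₀)) * X'
          ≤ c * (1 - δ ^ 2 / (2 * ((1 - ε) * (1 - f)))) * X' := by
  obtain ⟨hε0, hε1⟩ := hε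
  obtain ⟨hf0, hf1⟩ := hf
  obtain ⟨hδ0, hδ1⟩ := hδ
  obtain ⟨hc0, hc1⟩ := hc
  obtain ⟨hs0, hs1⟩ := hs
  have h1s : 0 < 1 - s := by linarith
  have h1f : 0 < 1 - f := by linarith
  have h1e : 0 < 1 - ε := by linarith
  have hmstar : 0 < (1 - s) ^ 2 * m₀ := by positivity
  have hσ : 0 < (1 - ε) * (1 - f) := mul_pos h1e h1f
  have hA0 : 0 ≤ t / ((1 - s) ^ 2 * m₀) := div_nonneg ht hmstar.le
  have hA : t / ((1 - s) ^ 2 * m₀) ≤ c * (1 - δ) := by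
    rw [div_le_iff₀ hmstar]
    nlinarith [mul_nonneg (mul_nonneg hs0 h1s.le) hm.le]
  set A := t / ((1 - s) ^ 2 * m₀) with hAdef
  set D := δ / ((1 - ε) * (1 - f)) with hDdef
  have hDσ : D * ((1 - ε) * (1 - f)) = δ := div_mul_cancel₀ δ hσ.ne'
  have hD0 : 0 ≤ D := div_nonneg hδ0.le hσ.le
  have hcoef : 0 < 1 + D := by linarith
  set E := δ ^ 2 / (2 * ((1 - ε) * (1 - f))) with hEdef
  have hEσ : E * (2 * ((1 - ε) * (1 - f))) = δ ^ 2 :=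
    div_mul_cancel₀ _ (by positivity)
  have kσ : 1 - δ / 2 ≤ (1 - ε) * (1 - f) := by nlinarith
  intro L X' Z hL hZ hX
  have hX0 : 0 < X' := lt_trans (by positivity) hX
  set F := f / (1 - f) with hFdef
  have hFf : F * (1 - f) = f := div_mul_cancel₀ f h1f.ne'
  have k1 : (1 + ε) * F ≤ (1 + D) * ((1 - ε) * f) := by
    nlinarith [hFf, hDσ, hσ, h1f, mul_pos hε0 hf0]
  constructor
  · have step : (1 + ε) * F * L ≤ (1 + D) * X' := by
      have h2 : (1 + ε) * F * L ≤ (1 + D) * ((1 - ε) * f) * L :=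
        mul_le_mul_of_nonneg_right k1 hL.le
      have h2' : (1 + D) * ((1 - ε) * f * L) ≤ (1 + D) * X' :=
        mul_le_mul_of_nonneg_left hX.le hcoef.le
      have heq : (1 + D) * ((1 - ε) * f) * L = (1 + D) * ((1 - ε) * f * L) := by
        ring
      linarith
    calc Z < (1 + ε) * A * F * L := hZ
      _ = A * ((1 + ε) * F * L) := by ring
      _ ≤ A * ((1 + D) * X') := mul_le_mul_of_nonneg_left step hA0
      _ = (1 + D) * A * X' := by ring
  · have scalar : (1 + D) * A ≤ c * (1 - E) := by
      have h3 : (1 + D) * A ≤ (1 + D) * (c * (1 - δ)) :=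
        mul_le_mul_of_nonneg_left hA hcoef.le
      have h4 : (1 + D) * (1 - δ) ≤ 1 - E := by
        have hq : δ * (1 - δ / 2) ≤ δ * ((1 - ε) * (1 - f)) :=
          mul_le_mul_of_nonneg_left kσ hδ0.le
        have e1 : (D * (1 - δ) + E) * ((1 - ε) * (1 - f))
            = δ * (1 - δ) + δ ^ 2 / 2 := by
          linear_combination (1 - δ) * hDσ + (1 / 2) * hEσ
        have e2 : δ * (1 - δ) + δ ^ 2 / 2 = δ * (1 - δ / 2) := by ring
        have e3 : D * (1 - δ) + E ≤ δ := by
          have : (D * (1 - δ) + E) * ((1 - ε) * (1 - f))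
              ≤ δ * ((1 - ε) * (1 - f)) := by
            rw [e1, e2]; exact hq
          exact le_of_mul_le_mul_right this hσ
        have e4 : (1 + D) * (1 - δ) = 1 - δ + (D * (1 - δ)) := by ring
        linarith
      have h5 : (1 + D) * (c * (1 - δ)) = c * ((1 + D) * (1 - δ)) := by ring
      have h6 : c * ((1 + D) * (1 - δ)) ≤ c * (1 - E) :=
        mul_le_mul_of_nonneg_left h4 hc0
      linarith
    calc (1 + D) * A * X' ≤ c * (1 - E) * X' :=
        mul_le_mul_of_nonneg_right scalar hX0.le
      _ = c * (1 - E) * X' := rfl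
end

section
/- Let ε, f ∈ (0,1) and δ ∈ (0,1] be real numbers with δ ≥ 3ε + 2f, let c ∈ [0,1], let s ∈ [0,1), and let t ≥ 0, m₀ > 0 be real numbers with t + s·(1−s)·m₀ ≤ c·(1−δ)·(1−s)²·m₀. Set m* = (1−s)²·m₀, and let φ ∈ [0,1] be a real number with φ ≤ s/(1−s). Then for any real numbers L > 0, Y*, Z with Z < (1+ε)·(t/m*)·(f/(1−f))·L and Y* > (1−ε)·f·(1−f)·L, it holds that Z < (1−ε)·(1−φ)·Y*. -/
set_option maxHeartbeats 1000000

/-- Message-loss typical-execution bound (Lemma 9 e):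
`Z(S) < (1-ε)(1-φ)·Y*(S)`. -/
theorem typical_execution_message_loss_e
    (ε f δ c s t m₀ φ : ℝ)
    (hε : ε ∈ Set.Ioo (0:ℝ) 1) (hf : f ∈ Set.Ioo (0:ℝ) 1)
    (hδ : δ ∈ Set.Ioc (0:ℝ) 1) (hδ2 : 3 * ε + 2 * f ≤ δ)
    (hc : c ∈ Set.Icc (0:ℝ) 1) (hs : s ∈ Set.Ico (0:ℝ) 1)
    (ht : 0 ≤ t) (hm : 0 < m₀)
    (htm : t + s * (1 - s) * m₀ ≤ c * (1 - δ) * ((1 - s) ^ 2 * m₀))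
    (hφ : φ ∈ Set.Icc (0:ℝ) 1) (hφs : φ ≤ s / (1 - s)) :
    ∀ L Y' Z : ℝ, 0 < L →
      Z < (1 + ε) * (t / ((1 - s) ^ 2 * m₀)) * (f / (1 - f)) * L →
      Y' > (1 - ε) * f * (1 - f) * L →
      Z < (1 - ε) * (1 - φ) * Y' := by
  intro L Y' Z hL hZ hY
  obtain ⟨hε0, hε1⟩ := hε
  obtain ⟨hf0, hf1⟩ := hf
  obtain ⟨hδ0, hδ1⟩ := hδ
  obtain ⟨hc0, hc1⟩ := hc
  obtain ⟨hs0, hs1⟩ := hs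
  obtain ⟨hφ0, hφ1⟩ := hφ
  have hs' : (0:ℝ) < 1 - s := by linarith
  have hf' : (0:ℝ) < 1 - f := by linarith
  have hmstar : (0:ℝ) < (1 - s) ^ 2 * m₀ := by positivity
  -- φ ≤ s/(1-s) ⇒ φ(1-s) ≤ s
  have hφs' : φ * (1 - s) ≤ s := by
    have h := mul_le_mul_of_nonneg_right hφs (le_of_lt hs')
    rwa [div_mul_cancel₀ _ (ne_of_gt hs')] at h
  -- t ≤ (1-δ)(1-φ)·m*
  have h1 : t ≤ (1 - δ) * (1 - φ) * ((1 - s) ^ 2 * m₀) := by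
    have hδ' : (0:ℝ) ≤ 1 - δ := by linarith
    have hcd : c * (1 - δ) * ((1 - s) ^ 2 * m₀) ≤ (1 - δ) * ((1 - s) ^ 2 * m₀) := by
      nlinarith [mul_nonneg hδ' hmstar.le]
    have hsm : φ * ((1 - s) ^ 2 * m₀) ≤ s * (1 - s) * m₀ := by
      nlinarith [mul_le_mul_of_nonneg_right hφs' (mul_pos hs' hm).le]
    have hφδ : 0 ≤ φ * δ * ((1 - s) ^ 2 * m₀) := by positivity
    nlinarith
  -- t / m* ≤ (1-δ)(1-φ)
  have h2 : t / ((1 - s) ^ 2 * m₀) ≤ (1 - δ) * (1 - φ) := by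
    rw [div_le_iff₀ hmstar]; linarith
  -- key: (1+ε)(1-δ) ≤ (1-ε)^2 (1-f)^2
  have h3 : (1 + ε) * (1 - δ) ≤ (1 - ε) ^ 2 * (1 - f) ^ 2 := by
    nlinarith [sq_nonneg ε, sq_nonneg f, sq_nonneg (ε - f), mul_pos hε0 hf0]
  have hq0 : (0:ℝ) ≤ f / (1 - f) := by positivity
  have hqf : f / (1 - f) * (1 - f) = f := div_mul_cancel₀ _ (ne_of_gt hf')
  set r := t / ((1 - s) ^ 2 * m₀) with hrdef
  set q := f / (1 - f) with hqdef
  clear_value r q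
  have hφ' : (0:ℝ) ≤ 1 - φ := by linarith
  have h1ε : (0:ℝ) ≤ 1 + ε := by linarith
  have step1 : Z < (1 + ε) * ((1 - δ) * (1 - φ)) * (q) * L := by
    refine lt_of_lt_of_le hZ ?_
    have h := mul_le_mul_of_nonneg_right h2
      (mul_nonneg (mul_nonneg h1ε hq0) hL.le)
    calc (1 + ε) * r * q * L = r * ((1 + ε) * q * L) := by ring
      _ ≤ (1 - δ) * (1 - φ) * ((1 + ε) * q * L) := h
      _ = (1 + ε) * ((1 - δ) * (1 - φ)) * q * L := by ring
  have step2 : (1 + ε) * ((1 - δ) * (1 - φ)) * (q) * L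
      ≤ (1 - ε) * (1 - φ) * ((1 - ε) * f * (1 - f) * L) := by
    have key : (1 + ε) * (1 - δ) * (q) ≤ (1 - ε) ^ 2 * (1 - f) * f := by
      calc (1 + ε) * (1 - δ) * (q)
          ≤ (1 - ε) ^ 2 * (1 - f) ^ 2 * (q) :=
            mul_le_mul_of_nonneg_right h3 hq0
        _ = (1 - ε) ^ 2 * (1 - f) * (q * (1 - f)) := by ring
        _ = (1 - ε) ^ 2 * (1 - f) * f := by rw [hqf]
    have h := mul_le_mul_of_nonneg_right key (mul_nonneg hφ' hL.le)
    calc (1 + ε) * ((1 - δ) * (1 - φ)) * (q) * L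
        = (1 + ε) * (1 - δ) * (q) * ((1 - φ) * L) := by ring
      _ ≤ (1 - ε) ^ 2 * (1 - f) * f * ((1 - φ) * L) := h
      _ = (1 - ε) * (1 - φ) * ((1 - ε) * f * (1 - f) * L) := by ring
  have step3 : (1 - ε) * (1 - φ) * ((1 - ε) * f * (1 - f) * L)
      ≤ (1 - ε) * (1 - φ) * Y' := by
    apply mul_le_mul_of_nonneg_left hY.le
    have hε' : (0:ℝ) ≤ 1 - ε := by linarith
    positivity
  linarith
end
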